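/- arXiv:1509.02764 — 2 statements merged into one kernel-verified Lean document; each statement's English description precedes it below -/
import Mathlib

section
/- For every real x > 0 and every real τ ≠ 0, the modified Bessel function of the first kind with purely imaginary order satisfies |I_{iτ}(x)| ≤ e^x · √(sinh(πτ)/(πτ)). -/
/-!
For `x > 0` the power `(x/2)^(2k + iτ)` has modulus `(x/2)^(2k)`, and the recurrence of `Γ`
gives `|Γ(k + 1 + iτ)| ≥ k! |Γ(1 + iτ)|`. With `(2k)! ≤ 4^k (k!)²` the `k`-th term of the
series is therefore at most `x^(2k)/(2k)! / |Γ(1 + iτ)|`, and these sum to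
`cosh x / |Γ(1 + iτ)| ≤ eˣ / |Γ(1 + iτ)|`. Finally the reflection formula yields
`|Γ(1 + iτ)|² = πτ / sinh(πτ)`.
-/

open Complex Real

/-- The modified Bessel function of the first kind. -/
noncomputable def besselI (ν z : ℂ) : ℂ :=
  ∑' k : ℕ, (z / 2) ^ (2 * (k : ℂ) + ν) / ((Nat.factorial k : ℂ) * Complex.Gamma ((k : ℂ) + ν + 1))

open scoped Nat

theorem Nat.factorial_two_mul_le_four_pow_mul_sq (k : ℕ) : (2 * k)! ≤ 4 ^ k * k ! ^ 2 := by
  have h := Nat.choose_mul_factorial_mul_factorial (show k ≤ 2 * k by omega)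
  rw [show 2 * k - k = k by omega, ← Nat.centralBinom_eq_two_mul_choose] at h
  rw [← h, mul_assoc, ← sq]
  exact Nat.mul_le_mul_right _ (Nat.centralBinom_le_four_pow k)

theorem Real.half_pow_two_mul_div_factorial_sq_le (x : ℝ) (k : ℕ) :
    (x / 2) ^ (2 * k) / (k ! : ℝ) ^ 2 ≤ x ^ (2 * k) / (2 * k)! := by
  have hfact : ((2 * k)! : ℝ) ≤ 4 ^ k * (k ! : ℝ) ^ 2 := by
    exact_mod_cast Nat.factorial_two_mul_le_four_pow_mul_sq k
  rw [div_pow, pow_mul (2 : ℝ), div_div]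
  norm_num
  gcongr
  exact Even.pow_nonneg (even_two_mul k) x

theorem Real.cosh_le_exp {x : ℝ} (hx : 0 ≤ x) : Real.cosh x ≤ Real.exp x := by
  rw [Real.cosh_eq]
  linarith [Real.exp_le_exp.mpr (show -x ≤ x by linarith)]

namespace Complex

theorem factorial_mul_norm_Gamma_add_one_le {ν : ℂ} (hν : 0 ≤ ν.re) (k : ℕ) :
    k ! * ‖Gamma (ν + 1)‖ ≤ ‖Gamma (k + ν + 1)‖ := by
  induction k with
  | zero => simp
  | succ n ih =>
    have hre : ((n : ℂ) + ν + 1).re = n + ν.re + 1 := by simp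
    have hle : (n + 1 : ℝ) ≤ ‖(n : ℂ) + ν + 1‖ := by
      refine le_trans ?_ (re_le_norm _)
      rw [hre]
      linarith
    have hne : (n : ℂ) + ν + 1 ≠ 0 := fun h => by
      have := congrArg re h
      rw [hre, zero_re] at this
      linarith [n.cast_nonneg (α := ℝ)]
    rw [show ((n + 1 : ℕ) : ℂ) + ν + 1 = (n + ν + 1) + 1 by push_cast; ring,
      Gamma_add_one _ hne, norm_mul, Nat.factorial_succ, Nat.cast_mul, mul_assoc]
    push_cast
    gcongr

/-- `|Γ(1 + iτ)|² = iτ Γ(iτ) Γ(1 - iτ)` by conjugation symmetry, then the reflection formula. -/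
theorem norm_Gamma_I_mul_add_one_sq {τ : ℝ} (hτ : τ ≠ 0) :
    ‖Gamma (I * τ + 1)‖ ^ 2 = π * τ / Real.sinh (π * τ) := by
  have hIτ : I * τ ≠ 0 := mul_ne_zero I_ne_zero (ofReal_ne_zero.mpr hτ)
  have hconj : (starRingEnd ℂ) (Gamma (I * τ + 1)) = Gamma (1 - I * τ) := by
    rw [← Gamma_conj]
    congr 1
    simp [sub_eq_neg_add, conj_ofReal]
  have hsin : sin (π * (I * τ)) = sinh (π * τ) * I := by
    rw [← sin_mul_I, mul_left_comm, mul_comm I]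
  apply ofReal_injective
  push_cast
  rw [← mul_conj', hconj, Gamma_add_one _ hIτ, mul_assoc, Gamma_mul_Gamma_one_sub, hsin]
  field_simp

theorem norm_besselI_term_le {ν : ℂ} (hν : 0 ≤ ν.re) {x : ℝ} (hx : 0 < x) (k : ℕ) :
    ‖((x : ℂ) / 2) ^ (2 * (k : ℂ) + ν) / ((k ! : ℂ) * Gamma ((k : ℂ) + ν + 1))‖ ≤
      (x / 2) ^ ν.re / ‖Gamma (ν + 1)‖ * (x ^ (2 * k) / (2 * k)!) := by
  have hΓ : 0 < ‖Gamma (ν + 1)‖ :=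
    norm_pos_iff.mpr (Gamma_ne_zero_of_re_pos (by simp only [add_re, one_re]; linarith))
  have hnum : ‖((x : ℂ) / 2) ^ (2 * (k : ℂ) + ν)‖ = (x / 2) ^ (2 * k) * (x / 2) ^ ν.re := by
    rw [← ofReal_ofNat, ← ofReal_div, norm_cpow_eq_rpow_re_of_pos (by positivity),
      ← Real.rpow_natCast, ← Real.rpow_add (by positivity)]
    simp
  calc _ = (x / 2) ^ (2 * k) * (x / 2) ^ ν.re / (k ! * ‖Gamma ((k : ℂ) + ν + 1)‖) := by
        rw [norm_div, norm_mul, hnum, norm_natCast]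
    _ ≤ (x / 2) ^ (2 * k) * (x / 2) ^ ν.re / (k ! * (k ! * ‖Gamma (ν + 1)‖)) := by
        gcongr
        exact factorial_mul_norm_Gamma_add_one_le hν k
    _ = (x / 2) ^ ν.re / ‖Gamma (ν + 1)‖ * ((x / 2) ^ (2 * k) / (k ! : ℝ) ^ 2) := by
        field_simp
    _ ≤ _ := mul_le_mul_of_nonneg_left (Real.half_pow_two_mul_div_factorial_sq_le x k)
        (by positivity)

theorem norm_besselI_le {ν : ℂ} (hν : 0 ≤ ν.re) {x : ℝ} (hx : 0 < x) :
    ‖besselI ν x‖ ≤ (x / 2) ^ ν.re / ‖Gamma (ν + 1)‖ * Real.exp x := by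
  have hcosh := (Real.hasSum_cosh x).mul_left ((x / 2) ^ ν.re / ‖Gamma (ν + 1)‖)
  calc ‖besselI ν x‖ ≤ (x / 2) ^ ν.re / ‖Gamma (ν + 1)‖ * Real.cosh x :=
        tsum_of_norm_bounded hcosh (norm_besselI_term_le hν hx)
    _ ≤ _ := by
        gcongr
        exact Real.cosh_le_exp hx.le

end Complex

theorem besselI_imaginary_order_bound (x τ : ℝ) (hx : 0 < x) (hτ : τ ≠ 0) :
    ‖besselI (Complex.I * τ) (x : ℂ)‖ ≤
      Real.exp x * Real.sqrt (Real.sinh (π * τ) / (π * τ)) := by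
  have hΓ : ‖Gamma (I * τ + 1)‖ = Real.sqrt (π * τ / Real.sinh (π * τ)) := by
    rw [← norm_Gamma_I_mul_add_one_sq hτ, Real.sqrt_sq (norm_nonneg _)]
  calc _ ≤ (x / 2) ^ (I * τ).re / ‖Gamma (I * τ + 1)‖ * Real.exp x :=
        norm_besselI_le (by simp) hx
    _ = _ := by
        rw [hΓ, show (I * τ).re = 0 by simp, Real.rpow_zero, one_div, ← Real.sqrt_inv, inv_div,
          mul_comm]
end

section
/- Boundedness of the Lebedev–Skalskaya type transform: if f : (0,∞) → ℂ is integrable, then for every real τ the integral (Ff)(τ) = (√π / cosh(πτ)) ∫_0^∞ e^{−x/2} Re[I_{iτ}(x/2)] f(x) dx converges absolutely and satisfies |(Ff)(τ)| ≤ √π · ∫_0^∞ |f(x)| dx. -/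
/-!
For `y > 0` the `k`-th term of the series for `I_{iτ}(y)` has modulus
`(y/2)^{2k} / (k! |Γ(k+1+iτ)|) ≤ ((y/2)^k/k!)^2 / |Γ(1+iτ)|`, and since `(y/2)^k/k! ≤ e^{y/2}`
these squares sum to at most `e^y`. Hence `|e^{-x/2} I_{iτ}(x/2)| ≤ 1/|Γ(1+iτ)|`, and by the
reflection formula `|Γ(1+iτ)|^{-2} = sinh(πτ)/(πτ) ≤ cosh(πτ) ≤ cosh(πτ)^2`. So the kernel of the
transform is bounded by `cosh(πτ)`, which the prefactor `√π / cosh(πτ)` cancels.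
-/

open MeasureTheory Set Complex Real

open scoped Nat ComplexConjugate

namespace Real

lemma sinh_le_mul_cosh {t : ℝ} (ht : 0 ≤ t) : sinh t ≤ t * cosh t := by
  refine hasSum_le (fun n => ?_) (hasSum_sinh t) ((hasSum_cosh t).mul_left t)
  rw [mul_div_assoc', ← pow_succ']
  gcongr
  exact (2 * n).le_succ

lemma sinh_div_le_cosh (t : ℝ) : sinh t / t ≤ cosh t := by
  rcases lt_trichotomy t 0 with ht | rfl | ht
  · have := sinh_le_mul_cosh (neg_nonneg.2 ht.le)
    rw [sinh_neg, cosh_neg] at this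
    rw [div_le_iff_of_neg ht]
    linarith
  · simp
  · rw [div_le_iff₀ ht, mul_comm]
    exact sinh_le_mul_cosh ht.le

end Real

namespace Complex

lemma factorial_mul_norm_Gamma_le_norm_Gamma_add_nat {s : ℂ} (hs : 1 ≤ s.re) (k : ℕ) :
    k ! * ‖Gamma s‖ ≤ ‖Gamma (s + k)‖ := by
  induction k with
  | zero => simp
  | succ k ih =>
    have hsk : s + k ≠ 0 := fun h => by
      have := congrArg re h
      simp only [add_re, natCast_re, zero_re] at this
      linarith [k.cast_nonneg (α := ℝ)]
    have hnorm : (k + 1 : ℝ) ≤ ‖s + k‖ := by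
      refine le_trans ?_ (re_le_norm _)
      simp only [add_re, natCast_re]
      linarith
    rw [Nat.cast_succ, ← add_assoc, Gamma_add_one _ hsk, norm_mul, Nat.factorial_succ,
      Nat.cast_mul, Nat.cast_succ, mul_assoc]
    exact mul_le_mul hnorm ih (by positivity) (norm_nonneg _)

lemma norm_Gamma_one_add_I_mul_sq {τ : ℝ} (hτ : τ ≠ 0) :
    ‖Gamma (1 + I * τ)‖ ^ 2 = π * τ / Real.sinh (π * τ) := by
  have hIτ : I * τ ≠ 0 := mul_ne_zero I_ne_zero (ofReal_ne_zero.2 hτ)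
  have hconj : Gamma (1 - I * τ) = conj (Gamma (1 + I * τ)) := by
    rw [← Gamma_conj]
    simp [map_add, map_mul, conj_I, conj_ofReal, sub_eq_add_neg]
  have hsin : sin (π * (I * τ)) = Real.sinh (π * τ) * I := by
    rw [show (π : ℂ) * (I * τ) = ((π * τ : ℝ) : ℂ) * I by push_cast; ring, sin_mul_I,
      ofReal_sinh]
  have key : Gamma (1 + I * τ) * Gamma (1 - I * τ) = ((π * τ / Real.sinh (π * τ) : ℝ) : ℂ) := by
    rw [add_comm, Gamma_add_one _ hIτ, mul_assoc, Gamma_mul_Gamma_one_sub, hsin]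
    push_cast
    field_simp
  rw [hconj, mul_conj, ofReal_inj] at key
  rw [← normSq_eq_norm_sq, key]

lemma inv_norm_Gamma_one_add_I_mul_le_cosh (τ : ℝ) :
    ‖Gamma (1 + I * τ)‖⁻¹ ≤ Real.cosh (π * τ) := by
  rcases eq_or_ne τ 0 with rfl | hτ
  · simp
  have hsq : ‖Gamma (1 + I * τ)‖⁻¹ ^ 2 ≤ Real.cosh (π * τ) ^ 2 :=
    calc ‖Gamma (1 + I * τ)‖⁻¹ ^ 2 = Real.sinh (π * τ) / (π * τ) := by
          rw [inv_pow, norm_Gamma_one_add_I_mul_sq hτ, inv_div]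
      _ ≤ Real.cosh (π * τ) := Real.sinh_div_le_cosh _
      _ ≤ Real.cosh (π * τ) ^ 2 := by nlinarith [Real.one_le_cosh (π * τ)]
  exact le_of_pow_le_pow_left₀ two_ne_zero (Real.cosh_pos _).le hsq

end Complex

noncomputable def besselITerm (ν z : ℂ) (k : ℕ) : ℂ :=
  (z / 2) ^ (2 * (k : ℂ) + ν) / ((Nat.factorial k : ℂ) * Gamma ((k : ℂ) + ν + 1))

lemma besselI_eq_tsum_besselITerm (ν z : ℂ) : besselI ν z = ∑' k, besselITerm ν z k := rfl

lemma measurable_besselI (ν : ℂ) : Measurable (besselI ν) :=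
  Measurable.tsum fun _ => by fun_prop

lemma norm_besselITerm_I_mul_le (τ : ℝ) {y : ℝ} (hy : 0 < y) (k : ℕ) :
    ‖besselITerm (I * τ) y k‖ ≤ ((y / 2) ^ k / k !) ^ 2 / ‖Gamma (1 + I * τ)‖ := by
  have hpow : ‖((y : ℂ) / 2) ^ (2 * (k : ℂ) + I * τ)‖ = (y / 2) ^ (2 * k) := by
    rw [show (y : ℂ) / 2 = ((y / 2 : ℝ) : ℂ) by push_cast; ring,
      norm_cpow_eq_rpow_re_of_pos (by positivity)]
    simpa using Real.rpow_natCast (y / 2) (2 * k)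
  have hGamma : k ! * ‖Gamma (1 + I * τ)‖ ≤ ‖Gamma (k + I * τ + 1)‖ := by
    have := factorial_mul_norm_Gamma_le_norm_Gamma_add_nat (s := 1 + I * τ) (by simp) k
    rwa [show 1 + I * τ + k = k + I * τ + 1 by ring] at this
  have hA : 0 < ‖Gamma (1 + I * τ)‖ := norm_pos_iff.2 (Gamma_ne_zero_of_re_pos (by simp))
  rw [besselITerm, norm_div, norm_mul, hpow, Complex.norm_natCast]
  calc (y / 2) ^ (2 * k) / (k ! * ‖Gamma (k + I * τ + 1)‖)
      ≤ (y / 2) ^ (2 * k) / (k ! * (k ! * ‖Gamma (1 + I * τ)‖)) := by gcongr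
    _ = ((y / 2) ^ k / k !) ^ 2 / ‖Gamma (1 + I * τ)‖ := by ring

lemma norm_besselI_I_mul_le (τ : ℝ) {y : ℝ} (hy : 0 < y) :
    ‖besselI (I * τ) y‖ ≤ Real.exp y / ‖Gamma (1 + I * τ)‖ := by
  have hexp : HasSum (fun k : ℕ => (y / 2) ^ k / k !) (Real.exp (y / 2)) := by
    simpa [Real.exp_eq_exp_ℝ] using NormedSpace.expSeries_div_hasSum_exp (y / 2)
  have hsplit : Real.exp y = Real.exp (y / 2) * Real.exp (y / 2) := by
    rw [← Real.exp_add, add_halves]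
  rw [besselI_eq_tsum_besselITerm, hsplit]
  refine tsum_of_norm_bounded ((hexp.mul_left (Real.exp (y / 2))).div_const _) fun k => ?_
  refine (norm_besselITerm_I_mul_le τ hy k).trans ?_
  rw [sq]
  gcongr
  exact Real.pow_div_factorial_le_exp _ (by positivity) k

lemma abs_exp_mul_re_besselI_le_cosh (τ : ℝ) {x : ℝ} (hx : 0 < x) :
    |Real.exp (-x / 2) * (besselI (I * τ) ((x : ℂ) / 2)).re| ≤ Real.cosh (π * τ) :=
  calc |Real.exp (-x / 2) * (besselI (I * τ) ((x : ℂ) / 2)).re|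
      = Real.exp (-x / 2) * |(besselI (I * τ) ((x : ℂ) / 2)).re| := by
        rw [abs_mul, abs_of_pos (Real.exp_pos _)]
    _ ≤ Real.exp (-x / 2) * (Real.exp (x / 2) / ‖Gamma (1 + I * τ)‖) := by
        gcongr
        exact (abs_re_le_norm _).trans (by simpa using norm_besselI_I_mul_le τ (half_pos hx))
    _ = ‖Gamma (1 + I * τ)‖⁻¹ := by
        rw [mul_div_assoc', ← Real.exp_add, neg_div, neg_add_cancel, Real.exp_zero, one_div]
    _ ≤ Real.cosh (π * τ) := inv_norm_Gamma_one_add_I_mul_le_cosh τ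

lemma norm_integral_smul_le_of_norm_le {α E : Type*} [MeasurableSpace α] [NormedAddCommGroup E]
    [NormedSpace ℝ E] {μ : Measure α} {w : α → ℝ} {f : α → E} {C : ℝ} (hf : Integrable f μ)
    (hw : ∀ᵐ x ∂μ, ‖w x‖ ≤ C) :
    ‖∫ x, w x • f x ∂μ‖ ≤ C * ∫ x, ‖f x‖ ∂μ := by
  rw [← integral_const_mul]
  refine norm_integral_le_of_norm_le (hf.norm.const_mul C) ?_
  filter_upwards [hw] with x hx
  rw [norm_smul]
  exact mul_le_mul_of_nonneg_right hx (norm_nonneg _)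

theorem LS_transform_bounded (f : ℝ → ℂ) (hf : IntegrableOn f (Ioi 0)) (τ : ℝ) :
    IntegrableOn
        (fun x => (Real.exp (-x / 2) * (besselI (Complex.I * τ) ((x : ℂ) / 2)).re : ℝ) • f x)
        (Ioi 0) ∧
      ‖(Real.sqrt π / Real.cosh (π * τ) : ℝ) •
          ∫ x in Ioi (0 : ℝ),
            (Real.exp (-x / 2) * (besselI (Complex.I * τ) ((x : ℂ) / 2)).re : ℝ) • f x‖ ≤
        Real.sqrt π * ∫ x in Ioi (0 : ℝ), ‖f x‖ := by
  set w : ℝ → ℝ := fun x => Real.exp (-x / 2) * (besselI (I * τ) ((x : ℂ) / 2)).re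
  have hw : Measurable w := by
    have := measurable_besselI (I * τ)
    fun_prop
  have hbound : ∀ᵐ x ∂volume.restrict (Ioi 0), ‖w x‖ ≤ Real.cosh (π * τ) :=
    ae_restrict_of_forall_mem measurableSet_Ioi fun x hx =>
      abs_exp_mul_re_besselI_le_cosh τ hx
  refine ⟨hf.bdd_smul _ hw.aestronglyMeasurable hbound, ?_⟩
  have hcosh := Real.cosh_pos (π * τ)
  calc ‖(√π / Real.cosh (π * τ)) • ∫ x in Ioi 0, w x • f x‖
      ≤ √π / Real.cosh (π * τ) * (Real.cosh (π * τ) * ∫ x in Ioi 0, ‖f x‖) := by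
        rw [norm_smul, Real.norm_of_nonneg (by positivity)]
        gcongr
        exact norm_integral_smul_le_of_norm_le hf hbound
    _ = √π * ∫ x in Ioi 0, ‖f x‖ := by field_simp
end
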